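/- arXiv:2502.18264 — 5 statements merged into one kernel-verified Lean document; each statement's English description precedes it below -/
import Mathlib

section
/- Define, for real parameters n₁, n₂, n₃ with n₁² + n₂² + n₃² = 1, p_s ∈ (0,1), θ_s ∈ ℝ, and p_c ∈ [0,1]: A = 16·p_c·(1−p_c)·p_s·(1−p_s)·n₂²·sin²θ_s, and B = 4p_c·[1/4 − (n₃(p_s−1/2) + √(p_s(1−p_s))(n₁cosθ_s + n₂sinθ_s))²] + 4(1−p_c)·[1/4 − (n₃(p_s−1/2) + √(p_s(1−p_s))(n₁cosθ_s − n₂sinθ_s))²]. Then A + B ≤ 1. -/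
/-- In ITDM phase estimation, the sum of the QFI coefficients satisfies `A + B ≤ 1`. -/
theorem itdm_A_plus_B_le_one
    (n₁ n₂ n₃ : ℝ) (hn : n₁ ^ 2 + n₂ ^ 2 + n₃ ^ 2 = 1)
    (p_s : ℝ) (hps : p_s ∈ Set.Ioo (0 : ℝ) 1)
    (θ_s : ℝ) (p_c : ℝ) (hpc : p_c ∈ Set.Icc (0 : ℝ) 1) :
    (16 * p_c * (1 - p_c) * p_s * (1 - p_s) * n₂ ^ 2 * Real.sin θ_s ^ 2) +
      (4 * p_c * (1 / 4 -
          (n₃ * (p_s - 1 / 2) + Real.sqrt (p_s * (1 - p_s)) *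
            (n₁ * Real.cos θ_s + n₂ * Real.sin θ_s)) ^ 2) +
        4 * (1 - p_c) * (1 / 4 -
          (n₃ * (p_s - 1 / 2) + Real.sqrt (p_s * (1 - p_s)) *
            (n₁ * Real.cos θ_s - n₂ * Real.sin θ_s)) ^ 2)) ≤ 1 := by
  obtain ⟨h0, h1⟩ := hps
  set s := Real.sqrt (p_s * (1 - p_s)) with hsdef
  have hs : s ^ 2 = p_s * (1 - p_s) := Real.sq_sqrt (by nlinarith)
  have hq := sq_nonneg (n₃ * (p_s - 1 / 2) + s * n₁ * Real.cos θ_s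
      + (2 * p_c - 1) * s * n₂ * Real.sin θ_s)
  nlinarith [mul_nonneg (mul_nonneg (mul_nonneg (by linarith [hpc.1] : (0:ℝ) ≤ 16 * p_c)
      (by linarith [hpc.2] : (0:ℝ) ≤ 1 - p_c)) (sq_nonneg n₂)) (sq_nonneg (Real.sin θ_s)),
    hq, hs]
end

section
/- Let U_θ = exp(−i(θ/2)(n₁σ_x + n₂σ_y + n₃σ_z)) with n₁² + n₂² + n₃² = 1, where σ_x, σ_y, σ_z are the Pauli matrices and transpose is taken in the computational basis. Then the eigenvalues of the unitary U_θ† U_θ^T are (1 − 2n₂²sin²(θ/2)) ± i·√(4n₂²sin²(θ/2)(1 − n₂²sin²(θ/2))); in particular they have modulus 1 and their common real part is 1 − 2n₂²sin²(θ/2). Moreover, if n₂ = 0 then U_θ† U_θ^T = I. -/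
open Matrix Complex
open scoped Matrix

noncomputable section

/-- Pauli matrices. -/
def σx : Matrix (Fin 2) (Fin 2) ℂ := !![0, 1; 1, 0]
def σy : Matrix (Fin 2) (Fin 2) ℂ := !![0, -I; I, 0]
def σz : Matrix (Fin 2) (Fin 2) ℂ := !![1, 0; 0, -1]

lemma exp_smul_sq_one (A : Matrix (Fin 2) (Fin 2) ℂ) (hA : A * A = 1) (θ : ℝ) :
    NormedSpace.exp ((-(I * θ) / 2) • A)
      = (Real.cos (θ/2) : ℂ) • (1 : Matrix (Fin 2) (Fin 2) ℂ)
        + ((Real.sin (θ/2) : ℂ) * -I) • A := by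
  set z : ℂ := ((θ/2 : ℝ) : ℂ) with hzdef
  have hz : (-(I * (θ:ℂ)) / 2) = z * -I := by rw [hzdef]; push_cast; ring
  rw [hz, NormedSpace.exp_eq_tsum (𝕂 := ℂ)]
  have hx : (z * -I) * (z * -I) = -(z^2) := by
    linear_combination z^2 * Complex.I_sq
  refine HasSum.tsum_eq (HasSum.even_add_odd ?_ ?_)
  · have h := (Complex.hasSum_cos z).smul_const (1 : Matrix (Fin 2) (Fin 2) ℂ)
    rw [← Complex.ofReal_cos] at h
    convert h using 2 with k
    case e'_3 => rfl
    rw [smul_pow, pow_mul, pow_mul, sq, sq, hA, one_pow, smul_smul, hx]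
    congr 1
    rw [neg_pow, ← pow_mul]
    ring
  · have h := ((Complex.hasSum_sin z).mul_right (-I)).smul_const A
    rw [← Complex.ofReal_sin] at h
    convert h using 2 with k
    case e'_3 => rfl
    rw [smul_pow, pow_succ, pow_succ, pow_mul, pow_mul, sq, sq, hA, one_pow, one_mul,
      smul_smul, hx, neg_pow, ← pow_mul]
    congr 1
    ring

/-- For `U_θ = exp(−i(θ/2)σ⃗·n̂)` with unit `n̂`, the spectrum of `U_θᴴ U_θᵀ` is
`{λ₊, λ₋}` with `λ± = (1 − 2n₂²sin²(θ/2)) ± i√(4n₂²sin²(θ/2)(1 − n₂²sin²(θ/2)))`;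
these have modulus 1 and real part `1 − 2n₂²sin²(θ/2)`. If `n₂ = 0` then
`U_θᴴ U_θᵀ = 1`. -/
theorem spectrum_Udag_Utranspose
    (n₁ n₂ n₃ : ℝ) (hn : n₁ ^ 2 + n₂ ^ 2 + n₃ ^ 2 = 1) (θ : ℝ) :
    (spectrum ℂ
        ((NormedSpace.exp ((-(I * θ) / 2) •
            ((n₁ : ℂ) • σx + (n₂ : ℂ) • σy + (n₃ : ℂ) • σz)))ᴴ *
          (NormedSpace.exp ((-(I * θ) / 2) •
            ((n₁ : ℂ) • σx + (n₂ : ℂ) • σy + (n₃ : ℂ) • σz)))ᵀ) =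
      {((1 - 2 * n₂ ^ 2 * Real.sin (θ / 2) ^ 2 : ℝ) : ℂ) +
          I * (Real.sqrt (4 * n₂ ^ 2 * Real.sin (θ / 2) ^ 2 *
            (1 - n₂ ^ 2 * Real.sin (θ / 2) ^ 2)) : ℝ),
        ((1 - 2 * n₂ ^ 2 * Real.sin (θ / 2) ^ 2 : ℝ) : ℂ) -
          I * (Real.sqrt (4 * n₂ ^ 2 * Real.sin (θ / 2) ^ 2 *
            (1 - n₂ ^ 2 * Real.sin (θ / 2) ^ 2)) : ℝ)}) ∧
    (∀ lam ∈ spectrum ℂ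
        ((NormedSpace.exp ((-(I * θ) / 2) •
            ((n₁ : ℂ) • σx + (n₂ : ℂ) • σy + (n₃ : ℂ) • σz)))ᴴ *
          (NormedSpace.exp ((-(I * θ) / 2) •
            ((n₁ : ℂ) • σx + (n₂ : ℂ) • σy + (n₃ : ℂ) • σz)))ᵀ),
      ‖lam‖ = 1 ∧ lam.re = 1 - 2 * n₂ ^ 2 * Real.sin (θ / 2) ^ 2) ∧
    (n₂ = 0 →
      (NormedSpace.exp ((-(I * θ) / 2) •
          ((n₁ : ℂ) • σx + (n₂ : ℂ) • σy + (n₃ : ℂ) • σz)))ᴴ *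
        (NormedSpace.exp ((-(I * θ) / 2) •
          ((n₁ : ℂ) • σx + (n₂ : ℂ) • σy + (n₃ : ℂ) • σz)))ᵀ = 1) := by
  have hC : (n₁ : ℂ) ^ 2 + (n₂ : ℂ) ^ 2 + (n₃ : ℂ) ^ 2 = 1 := by exact_mod_cast hn
  have hcs : (Real.cos (θ/2) : ℂ) ^ 2 + (Real.sin (θ/2) : ℂ) ^ 2 = 1 := by
    rw [← Complex.ofReal_pow, ← Complex.ofReal_pow, ← Complex.ofReal_add,
      ← Complex.ofReal_one, Complex.ofReal_inj]
    exact Real.cos_sq_add_sin_sq _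
  set c : ℂ := (Real.cos (θ/2) : ℂ) with hcdef
  set s : ℂ := (Real.sin (θ/2) : ℂ) with hsdef
  -- the Pauli vector as an explicit matrix
  have hAeq : ((n₁ : ℂ) • σx + (n₂ : ℂ) • σy + (n₃ : ℂ) • σz)
      = !![(n₃ : ℂ), n₁ - I * n₂; n₁ + I * n₂, -n₃] := by
    ext i j
    fin_cases i <;> fin_cases j <;> simp [σx, σy, σz] <;> ring
  have hA : (!![(n₃ : ℂ), n₁ - I * n₂; n₁ + I * n₂, -n₃] : Matrix (Fin 2) (Fin 2) ℂ) *
      !![(n₃ : ℂ), n₁ - I * n₂; n₁ + I * n₂, -n₃] = 1 := by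
    rw [Matrix.mul_fin_two, Matrix.one_fin_two]
    ext i j
    fin_cases i <;> fin_cases j <;> simp <;>
      first
        | ring1
        | linear_combination hC - (n₂:ℂ)^2 * Complex.I_sq
  -- the explicit form of `U`
  have hU : NormedSpace.exp ((-(I * θ) / 2) •
        ((n₁ : ℂ) • σx + (n₂ : ℂ) • σy + (n₃ : ℂ) • σz))
      = !![c - I*(s*n₃), -(s*n₂) - I*(s*n₁); s*n₂ - I*(s*n₁), c + I*(s*n₃)] := by
    rw [hAeq, exp_smul_sq_one _ hA θ, ← hcdef, ← hsdef]
    ext i j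
    fin_cases i <;> fin_cases j <;>
      simp [Matrix.one_apply] <;>
      first
        | ring1
        | linear_combination (s*(n₂:ℂ)) * Complex.I_sq
        | linear_combination (-(s*(n₂:ℂ))) * Complex.I_sq
  -- the explicit form of `Uᴴ * Uᵀ`
  have hM : (NormedSpace.exp ((-(I * θ) / 2) •
        ((n₁ : ℂ) • σx + (n₂ : ℂ) • σy + (n₃ : ℂ) • σz)))ᴴ *
      (NormedSpace.exp ((-(I * θ) / 2) •
        ((n₁ : ℂ) • σx + (n₂ : ℂ) • σy + (n₃ : ℂ) • σz)))ᵀ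
      = !![c^2 + s^2*(n₁^2 - n₂^2 + n₃^2) - 2*I*(s^2*(n₁*n₂)), 2*(s*n₂)*(c + I*(s*n₃));
          -(2*(s*n₂))*(c - I*(s*n₃)), c^2 + s^2*(n₁^2 - n₂^2 + n₃^2) + 2*I*(s^2*(n₁*n₂))] := by
    rw [hU]
    have hT : (!![c - I*(s*n₃), -(s*n₂) - I*(s*n₁); s*n₂ - I*(s*n₁), c + I*(s*n₃)]
        : Matrix (Fin 2) (Fin 2) ℂ)ᵀ
        = !![c - I*(s*n₃), s*n₂ - I*(s*n₁); -(s*n₂) - I*(s*n₁), c + I*(s*n₃)] := by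
      ext i j
      fin_cases i <;> fin_cases j <;> simp
    have hH : (!![c - I*(s*n₃), -(s*n₂) - I*(s*n₁); s*n₂ - I*(s*n₁), c + I*(s*n₃)]
        : Matrix (Fin 2) (Fin 2) ℂ)ᴴ
        = !![c + I*(s*n₃), s*n₂ + I*(s*n₁); -(s*n₂) + I*(s*n₁), c - I*(s*n₃)] := by
      ext i j
      fin_cases i <;> fin_cases j <;>
        simp [Matrix.conjTranspose_apply, Complex.star_def, _root_.map_add, _root_.map_sub,
          _root_.map_mul, Complex.conj_I, Complex.conj_ofReal,
          -Complex.ofReal_cos, -Complex.ofReal_sin, hcdef, hsdef] <;> ring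
    rw [hT, hH, Matrix.mul_fin_two]
    ext i j
    fin_cases i <;> fin_cases j <;> simp <;>
      first
        | ring1
        | linear_combination (-(s^2*((n₁:ℂ)^2 + (n₃:ℂ)^2))) * Complex.I_sq
        | linear_combination (s^2*((n₁:ℂ)^2 + (n₃:ℂ)^2)) * Complex.I_sq
  -- real preliminaries
  have hx0 : 0 ≤ n₂^2 * Real.sin (θ/2)^2 := by positivity
  have hx1 : n₂^2 * Real.sin (θ/2)^2 ≤ 1 := by
    nlinarith [Real.sin_sq_le_one (θ/2), sq_nonneg n₁, sq_nonneg n₃, sq_nonneg n₂,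
      sq_nonneg (Real.sin (θ/2))]
  have harg : 0 ≤ 4 * n₂^2 * Real.sin (θ/2)^2 * (1 - n₂^2 * Real.sin (θ/2)^2) := by
    nlinarith
  have hq2 : Real.sqrt (4 * n₂^2 * Real.sin (θ/2)^2 * (1 - n₂^2 * Real.sin (θ/2)^2)) ^ 2
      = 4 * n₂^2 * Real.sin (θ/2)^2 * (1 - n₂^2 * Real.sin (θ/2)^2) :=
    Real.sq_sqrt harg
  have hrC : ((1 - 2 * n₂ ^ 2 * Real.sin (θ / 2) ^ 2 : ℝ) : ℂ)
      = 1 - 2 * (n₂:ℂ)^2 * s^2 := by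
    push_cast [-Complex.ofReal_sin, -Complex.ofReal_cos]
    rw [← hsdef]
  have hq2C : ((Real.sqrt (4 * n₂ ^ 2 * Real.sin (θ / 2) ^ 2 *
        (1 - n₂ ^ 2 * Real.sin (θ / 2) ^ 2)) : ℝ) : ℂ) ^ 2
      = 4 * (n₂:ℂ)^2 * s^2 * (1 - (n₂:ℂ)^2 * s^2) := by
    rw [← Complex.ofReal_pow, hq2]
    push_cast [-Complex.ofReal_sin, -Complex.ofReal_cos]
    rw [← hsdef]
  -- the determinant of `lam • 1 - M`
  have halg : ∀ lam : ℂ, algebraMap ℂ (Matrix (Fin 2) (Fin 2) ℂ) lam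
      = !![lam, 0; 0, lam] := by
    intro lam
    ext i j
    fin_cases i <;> fin_cases j <;>
      simp [Matrix.algebraMap_eq_diagonal, Matrix.diagonal]
  have hTr : (c^2 + s^2*(n₁^2 - n₂^2 + n₃^2) - 2*I*(s^2*(n₁*n₂)))
        + (c^2 + s^2*(n₁^2 - n₂^2 + n₃^2) + 2*I*(s^2*(n₁*n₂)))
      = 2 * (1 - 2 * (n₂:ℂ)^2 * s^2) := by
    linear_combination 2*hcs + 2*s^2*hC
  have hDet : (c^2 + s^2*(n₁^2 - n₂^2 + n₃^2) - 2*I*(s^2*(n₁*n₂)))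
        * (c^2 + s^2*(n₁^2 - n₂^2 + n₃^2) + 2*I*(s^2*(n₁*n₂)))
        - (2*(s*n₂)*(c + I*(s*n₃))) * (-(2*(s*n₂))*(c - I*(s*n₃)))
      = 1 := by
    linear_combination (c^2 + s^2*(n₁^2 - n₂^2 + n₃^2) + 1) * hcs
      + (s^2 * (c^2 + s^2*(n₁^2 - n₂^2 + n₃^2) + 1)) * hC
      + (-(4*s^4*(n₁:ℂ)^2*(n₂:ℂ)^2) - 4*s^4*(n₂:ℂ)^2*(n₃:ℂ)^2) * Complex.I_sq
      + (2*s^2*(n₂:ℂ)^2) * hcs + (2*s^4*(n₂:ℂ)^2) * hC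
  have hdet : ∀ lam : ℂ,
      (algebraMap ℂ (Matrix (Fin 2) (Fin 2) ℂ) lam -
        !![c^2 + s^2*(n₁^2 - n₂^2 + n₃^2) - 2*I*(s^2*(n₁*n₂)), 2*(s*n₂)*(c + I*(s*n₃));
          -(2*(s*n₂))*(c - I*(s*n₃)), c^2 + s^2*(n₁^2 - n₂^2 + n₃^2) + 2*I*(s^2*(n₁*n₂))]).det
      = (lam - (((1 - 2 * n₂ ^ 2 * Real.sin (θ / 2) ^ 2 : ℝ) : ℂ) +
          I * (Real.sqrt (4 * n₂ ^ 2 * Real.sin (θ / 2) ^ 2 *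
            (1 - n₂ ^ 2 * Real.sin (θ / 2) ^ 2)) : ℝ)))
        * (lam - (((1 - 2 * n₂ ^ 2 * Real.sin (θ / 2) ^ 2 : ℝ) : ℂ) -
          I * (Real.sqrt (4 * n₂ ^ 2 * Real.sin (θ / 2) ^ 2 *
            (1 - n₂ ^ 2 * Real.sin (θ / 2) ^ 2)) : ℝ))) := by
    intro lam
    rw [halg lam]
    have hsub : (!![lam, 0; 0, lam] -
        !![c^2 + s^2*(n₁^2 - n₂^2 + n₃^2) - 2*I*(s^2*(n₁*n₂)), 2*(s*n₂)*(c + I*(s*n₃));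
          -(2*(s*n₂))*(c - I*(s*n₃)), c^2 + s^2*(n₁^2 - n₂^2 + n₃^2) + 2*I*(s^2*(n₁*n₂))])
        = !![lam - (c^2 + s^2*(n₁^2 - n₂^2 + n₃^2) - 2*I*(s^2*(n₁*n₂))),
              -(2*(s*n₂)*(c + I*(s*n₃)));
            -(-(2*(s*n₂))*(c - I*(s*n₃))),
              lam - (c^2 + s^2*(n₁^2 - n₂^2 + n₃^2) + 2*I*(s^2*(n₁*n₂)))] := by
      ext i j
      fin_cases i <;> fin_cases j <;> simp [Matrix.sub_apply]
    rw [hsub, Matrix.det_fin_two_of]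
    linear_combination (-lam) * hTr + hDet + (2*lam) * hrC
      - (((1 - 2 * n₂ ^ 2 * Real.sin (θ / 2) ^ 2 : ℝ) : ℂ) + 1 - 2*(n₂:ℂ)^2*s^2) * hrC
      + (((Real.sqrt (4 * n₂ ^ 2 * Real.sin (θ / 2) ^ 2 *
          (1 - n₂ ^ 2 * Real.sin (θ / 2) ^ 2)) : ℝ) : ℂ))^2 * Complex.I_sq
      - hq2C
  -- spectrum membership
  have hspec : ∀ lam : ℂ, (lam ∈ spectrum ℂ
      ((NormedSpace.exp ((-(I * θ) / 2) •
          ((n₁ : ℂ) • σx + (n₂ : ℂ) • σy + (n₃ : ℂ) • σz)))ᴴ *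
        (NormedSpace.exp ((-(I * θ) / 2) •
          ((n₁ : ℂ) • σx + (n₂ : ℂ) • σy + (n₃ : ℂ) • σz)))ᵀ)) ↔
      (lam = (((1 - 2 * n₂ ^ 2 * Real.sin (θ / 2) ^ 2 : ℝ) : ℂ) +
          I * (Real.sqrt (4 * n₂ ^ 2 * Real.sin (θ / 2) ^ 2 *
            (1 - n₂ ^ 2 * Real.sin (θ / 2) ^ 2)) : ℝ)) ∨
        lam = (((1 - 2 * n₂ ^ 2 * Real.sin (θ / 2) ^ 2 : ℝ) : ℂ) -
          I * (Real.sqrt (4 * n₂ ^ 2 * Real.sin (θ / 2) ^ 2 *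
            (1 - n₂ ^ 2 * Real.sin (θ / 2) ^ 2)) : ℝ))) := by
    intro lam
    rw [spectrum.mem_iff, hM, Matrix.isUnit_iff_isUnit_det, isUnit_iff_ne_zero, ne_eq, not_not,
      hdet lam, mul_eq_zero, sub_eq_zero, sub_eq_zero]
  refine ⟨?_, ?_, ?_⟩
  · ext lam
    rw [hspec lam]
    simp [Set.mem_insert_iff, Set.mem_singleton_iff]
  · intro lam hlam
    have hRQ : (1 - 2 * n₂ ^ 2 * Real.sin (θ / 2) ^ 2) ^ 2 +
        Real.sqrt (4 * n₂ ^ 2 * Real.sin (θ / 2) ^ 2 *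
          (1 - n₂ ^ 2 * Real.sin (θ / 2) ^ 2)) ^ 2 = 1 := by
      rw [hq2]; ring
    have habs : ∀ Q : ℝ, ‖(((1 - 2 * n₂ ^ 2 * Real.sin (θ / 2) ^ 2 : ℝ) : ℂ)
        + I * (Q : ℝ))‖ = Real.sqrt ((1 - 2 * n₂ ^ 2 * Real.sin (θ / 2) ^ 2) ^ 2 + Q ^ 2) := by
      intro Q
      rw [Complex.norm_def, Complex.normSq_apply]
      simp only [Complex.add_re, Complex.add_im, Complex.mul_re, Complex.mul_im,
        Complex.I_re, Complex.I_im, Complex.ofReal_re, Complex.ofReal_im]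
      congr 1
      ring
    have hre : ∀ Q : ℝ, ((((1 - 2 * n₂ ^ 2 * Real.sin (θ / 2) ^ 2 : ℝ) : ℂ))
        + I * (Q : ℝ)).re = 1 - 2 * n₂ ^ 2 * Real.sin (θ / 2) ^ 2 := by
      intro Q
      simp only [Complex.add_re, Complex.mul_re, Complex.I_re, Complex.I_im,
        Complex.ofReal_re, Complex.ofReal_im]
      ring
    have hminus : (((1 - 2 * n₂ ^ 2 * Real.sin (θ / 2) ^ 2 : ℝ) : ℂ) -
        I * (Real.sqrt (4 * n₂ ^ 2 * Real.sin (θ / 2) ^ 2 *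
          (1 - n₂ ^ 2 * Real.sin (θ / 2) ^ 2)) : ℝ))
        = (((1 - 2 * n₂ ^ 2 * Real.sin (θ / 2) ^ 2 : ℝ) : ℂ) +
          I * ((-Real.sqrt (4 * n₂ ^ 2 * Real.sin (θ / 2) ^ 2 *
            (1 - n₂ ^ 2 * Real.sin (θ / 2) ^ 2)) : ℝ) : ℂ)) := by
      push_cast
      ring
    obtain h | h := (hspec lam).1 hlam <;> subst h
    · refine ⟨?_, hre _⟩
      rw [habs, hRQ, Real.sqrt_one]
    · rw [hminus]
      refine ⟨?_, hre _⟩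
      rw [habs, neg_pow, neg_one_sq, one_mul, hRQ, Real.sqrt_one]
  · intro h
    subst h
    norm_num at hC
    rw [hM, Matrix.one_fin_two]
    ext i j
    fin_cases i <;> fin_cases j <;>
      simp <;>
      first
        | ring1
        | linear_combination hcs + s^2*hC

end
end

section
/- Let U_θ = exp(−i(θ/2)σ⃗·n̂) with unit vector n̂ = (n₁,n₂,n₃), and let ρ = (I + s⃗·σ⃗)/2 be a qubit density matrix with |s⃗| ≤ 1. Then Tr(U_θ^T ρ U_θ†) = 1 − n₂²(1 − cos θ) + i·[n₂n₃s₁(1 − cos θ) − n₁n₂s₃(1 − cos θ) + n₂s₂ sin θ], where s⃗ = (s₁,s₂,s₃). -/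
open Matrix Complex
open scoped Matrix

set_option maxHeartbeats 1000000
noncomputable section

lemma exp_smul_of_sq_one (c : ℂ) (A : Matrix (Fin 2) (Fin 2) ℂ) (hA : A * A = 1) :
    NormedSpace.exp (c • A) = Complex.cosh c • 1 + Complex.sinh c • A := by
  rw [NormedSpace.exp_eq_tsum ℂ]
  refine HasSum.tsum_eq ?_
  refine HasSum.even_add_odd ?_ ?_
  · convert (Complex.hasSum_cosh c).smul_const (1 : Matrix (Fin 2) (Fin 2) ℂ) using 2 with n
    · rfl
    rw [smul_pow, pow_mul A, pow_two A, hA, one_pow, smul_smul]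
    congr 1
    rw [div_eq_mul_inv, mul_comm]
  · convert (Complex.hasSum_sinh c).smul_const A using 2 with n
    · rfl
    rw [smul_pow, pow_succ A, pow_mul A, pow_two A, hA, one_pow, one_mul, smul_smul]
    congr 1
    rw [div_eq_mul_inv, mul_comm]

/-- Trace formula `Tr(U_θᵀ ρ U_θᴴ) = 1 − n₂²(1−cosθ)
+ i[n₂n₃s₁(1−cosθ) − n₁n₂s₃(1−cosθ) + n₂s₂ sinθ]` for a qubit density matrix
`ρ = (I + s⃗·σ⃗)/2` and `U_θ = exp(−i(θ/2)σ⃗·n̂)`. -/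
theorem trace_flipped_overlap
    (n₁ n₂ n₃ : ℝ) (hn : n₁ ^ 2 + n₂ ^ 2 + n₃ ^ 2 = 1)
    (s₁ s₂ s₃ : ℝ) (hs : s₁ ^ 2 + s₂ ^ 2 + s₃ ^ 2 ≤ 1) (θ : ℝ) :
    ((NormedSpace.exp ((-(I * θ) / 2) •
          ((n₁ : ℂ) • σx + (n₂ : ℂ) • σy + (n₃ : ℂ) • σz)))ᵀ *
        ((1 / 2 : ℂ) • (1 + (s₁ : ℂ) • σx + (s₂ : ℂ) • σy + (s₃ : ℂ) • σz)) *
        (NormedSpace.exp ((-(I * θ) / 2) •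
          ((n₁ : ℂ) • σx + (n₂ : ℂ) • σy + (n₃ : ℂ) • σz)))ᴴ).trace =
      ((1 - n₂ ^ 2 * (1 - Real.cos θ) : ℝ) : ℂ) +
        I * ((n₂ * n₃ * s₁ * (1 - Real.cos θ) - n₁ * n₂ * s₃ * (1 - Real.cos θ) +
          n₂ * s₂ * Real.sin θ : ℝ) : ℂ) := by
  have hnc : (n₁:ℂ)^2 + (n₂:ℂ)^2 + (n₃:ℂ)^2 = 1 := by exact_mod_cast hn
  have hA : ((n₁ : ℂ) • σx + (n₂ : ℂ) • σy + (n₃ : ℂ) • σz) *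
      ((n₁ : ℂ) • σx + (n₂ : ℂ) • σy + (n₃ : ℂ) • σz) = 1 := by
    ext i j
    fin_cases i <;> fin_cases j <;>
      simp [σx, σy, σz, Matrix.mul_apply, Fin.sum_univ_two, Matrix.one_apply,
        Complex.I_sq] <;>
      first
        | ring1
        | linear_combination hnc
        | linear_combination -hnc
        | linear_combination hnc - ((n₂:ℂ)^2) * Complex.I_sq
        | linear_combination -((n₂:ℂ)^2) * Complex.I_sq
        | linear_combination ((n₂:ℂ)^2) * Complex.I_sq
        | linear_combination -hnc + ((n₂:ℂ)^2) * Complex.I_sq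
        | linear_combination -hnc - ((n₂:ℂ)^2) * Complex.I_sq
  have hcform : (-(I * θ) / 2 : ℂ) = ((-(θ/2) : ℝ) : ℂ) * I := by push_cast; ring
  have hcosh : Complex.cosh (-(I * θ) / 2) = ((Real.cos (θ/2) : ℝ) : ℂ) := by
    rw [hcform, Complex.cosh_mul_I, ← Complex.ofReal_cos, Real.cos_neg]
  have hsinh : Complex.sinh (-(I * θ) / 2) = -((Real.sin (θ/2) : ℝ) : ℂ) * I := by
    rw [hcform, Complex.sinh_mul_I, ← Complex.ofReal_sin, Real.sin_neg, Complex.ofReal_neg,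
      neg_mul]
  set a : ℝ := Real.cos (θ/2) with ha
  set b : ℝ := Real.sin (θ/2) with hb
  have hab : a^2 + b^2 = 1 := by rw [add_comm]; exact Real.sin_sq_add_cos_sq (θ/2)
  have hcosr : Real.cos θ = 2*a^2 - 1 := by
    conv_lhs => rw [show θ = 2*(θ/2) by ring]
    rw [Real.cos_two_mul]
  have hsinr : Real.sin θ = 2*b*a := by
    conv_lhs => rw [show θ = 2*(θ/2) by ring]
    rw [Real.sin_two_mul]
  have hU : NormedSpace.exp ((-(I * θ) / 2) •
        ((n₁ : ℂ) • σx + (n₂ : ℂ) • σy + (n₃ : ℂ) • σz)) =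
      !![(a:ℂ) - I*b*n₃, -(b:ℂ)*n₂ - I*b*n₁; (b:ℂ)*n₂ - I*b*n₁, (a:ℂ) + I*b*n₃] := by
    rw [exp_smul_of_sq_one _ _ hA, hcosh, hsinh]
    ext i j
    fin_cases i <;> fin_cases j <;>
      simp [σx, σy, σz, Matrix.one_apply] <;>
      first
        | ring1
        | exact Or.inl (mul_comm _ _)
        | linear_combination ((b:ℂ)*(n₂:ℂ)) * Complex.I_sq
        | linear_combination -((b:ℂ)*(n₂:ℂ)) * Complex.I_sq
  have hUt : (NormedSpace.exp ((-(I * θ) / 2) •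
        ((n₁ : ℂ) • σx + (n₂ : ℂ) • σy + (n₃ : ℂ) • σz)))ᵀ =
      !![(a:ℂ) - I*b*n₃, (b:ℂ)*n₂ - I*b*n₁; -(b:ℂ)*n₂ - I*b*n₁, (a:ℂ) + I*b*n₃] := by
    rw [hU]
    ext i j
    fin_cases i <;> fin_cases j <;> simp [Matrix.transpose_apply]
  have hUh : (NormedSpace.exp ((-(I * θ) / 2) •
        ((n₁ : ℂ) • σx + (n₂ : ℂ) • σy + (n₃ : ℂ) • σz)))ᴴ =
      !![(a:ℂ) + I*b*n₃, (b:ℂ)*n₂ + I*b*n₁; -(b:ℂ)*n₂ + I*b*n₁, (a:ℂ) - I*b*n₃] := by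
    rw [hU]
    ext i j
    fin_cases i <;> fin_cases j <;>
      simp [Matrix.conjTranspose_apply, Complex.conj_ofReal] <;> ring1
  have hρ : (1 / 2 : ℂ) • (1 + (s₁ : ℂ) • σx + (s₂ : ℂ) • σy + (s₃ : ℂ) • σz) =
      !![(((1+s₃)/2 : ℝ) : ℂ), ((s₁/2 : ℝ) : ℂ) - I*((s₂/2 : ℝ) : ℂ);
         ((s₁/2 : ℝ) : ℂ) + I*((s₂/2 : ℝ) : ℂ), (((1-s₃)/2 : ℝ) : ℂ)] := by
    ext i j
    fin_cases i <;> fin_cases j <;>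
      simp [σx, σy, σz, Matrix.one_apply] <;> push_cast <;> ring1
  rw [hUt, hρ, hUh, Matrix.trace_fin_two]
  simp only [Matrix.mul_apply, Fin.sum_univ_two, Matrix.of_apply,
    Matrix.cons_val', Matrix.cons_val_zero, Matrix.cons_val_one, Matrix.head_cons,
    Matrix.head_fin_const, Matrix.empty_val', Matrix.cons_val_fin_one, Fin.isValue]
  apply Complex.ext <;>
    simp only [Complex.add_re, Complex.add_im, Complex.sub_re, Complex.sub_im,
      Complex.mul_re, Complex.mul_im, Complex.neg_re, Complex.neg_im, Complex.one_re,
      Complex.one_im, Complex.ofReal_re, Complex.ofReal_im, Complex.I_re, Complex.I_im,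
      Complex.zero_re, Complex.zero_im]
  · rw [hcosr]
    first
      | linear_combination (1 - 2*n₂^2) * hab + b^2 * hn
      | linear_combination -((1 - 2*n₂^2) * hab + b^2 * hn)
      | nlinarith [hab, hn, sq_nonneg a, sq_nonneg b]
  · rw [hcosr, hsinr]
    first
      | ring1
      | linear_combination (2*(n₂*n₃*s₁ - n₁*n₂*s₃)) * hab
      | linear_combination (-2*(n₂*n₃*s₁ - n₁*n₂*s₃)) * hab

end
end

section
/- Fix q ∈ [0,1] and n₂ ∈ [−1,1], and define F(θ) = n₂⁴ q² sin²θ / (1 − ((1+q)/2 − n₂² q (1 − cos θ))²) for θ where the denominator is positive. Then (1/2π)·∫₀^{2π} F(θ) dθ = 1 − (1/4)·√((3+q)(3+q−4qn₂²)) − (1/4)·√((1−q)(1−q+4qn₂²)). -/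
open Real

private lemma itdm_add_cos_pos (A B : ℝ) (h : |B| < A) (x : ℝ) :
    0 < A + B * Real.cos x := by
  have hB := abs_le.1 h.le
  have h1 : |B * Real.cos x| ≤ |B| := by
    rw [abs_mul]
    nlinarith [Real.abs_cos_le_one x, abs_nonneg B]
  have h2 := abs_le.1 h1
  nlinarith [h2.1]

private lemma itdm_hasDerivAt_G (A B : ℝ) (h : |B| < A) (θ : ℝ) :
    HasDerivAt (fun x => (Real.sqrt (A^2 - B^2))⁻¹ *
      (x - 2 * Real.arctan (B * Real.sin x / (A + Real.sqrt (A^2 - B^2) + B * Real.cos x))))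
      ((A + B * Real.cos θ)⁻¹) θ := by
  have hB := abs_le.1 h.le
  have hA : 0 < A := lt_of_le_of_lt (abs_nonneg B) h
  set r := Real.sqrt (A^2 - B^2) with hrdef
  have hr2 : r^2 = A^2 - B^2 := Real.sq_sqrt (by nlinarith [sq_abs B, abs_nonneg B])
  have hrpos : 0 < r := Real.sqrt_pos.2 (by nlinarith [sq_abs B, abs_nonneg B])
  have hdpos : ∀ x, 0 < A + r + B * Real.cos x := by
    intro x
    have h1 : |B * Real.cos x| ≤ |B| := by
      rw [abs_mul]
      nlinarith [Real.abs_cos_le_one x, abs_nonneg B]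
    have h2 := abs_le.1 h1
    nlinarith [h2.1]
  have hD : 0 < A + B * Real.cos θ := itdm_add_cos_pos A B h θ
  have hf : HasDerivAt (fun x => B * Real.sin x / (A + r + B * Real.cos x))
      ((B * Real.cos θ * (A + r + B * Real.cos θ) - B * Real.sin θ * (B * -Real.sin θ)) /
        (A + r + B * Real.cos θ)^2) θ :=
    HasDerivAt.div ((Real.hasDerivAt_sin θ).const_mul B)
      (((Real.hasDerivAt_cos θ).const_mul B).const_add (A + r)) (ne_of_gt (hdpos θ))
  have harc := hf.arctan
  have hG := ((hasDerivAt_id θ).sub (harc.const_mul 2)).const_mul r⁻¹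
  refine hG.congr_deriv (Eq.symm ?_)
  have hs := Real.sin_sq_add_cos_sq θ
  have hd := hdpos θ
  set s := Real.sin θ
  set c := Real.cos θ
  have hdne : A + r + B*c ≠ 0 := ne_of_gt hd
  have hDne : A + B*c ≠ 0 := ne_of_gt hD
  have hArne : A + r ≠ 0 := by positivity
  have hrne : r ≠ 0 := ne_of_gt hrpos
  have h1 : (1 + (B*s/(A+r+B*c))^2) * (A+r+B*c)^2 = 2*(A+r)*(A+B*c) := by
    field_simp
    linear_combination hr2 + B^2*hs
  have h2 : B*c*(A+r+B*c) - B*s*(B*-s) = B*c*(A+r) + B^2 := by linear_combination B^2*hs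
  have e2 : 1 / (1 + (B*s/(A+r+B*c))^2) * ((B*c*(A+r+B*c) - B*s*(B*-s)) / (A+r+B*c)^2)
      = (B*c*(A+r)+B^2) / (2*(A+r)*(A+B*c)) := by
    rw [div_mul_div_comm, one_mul, h2, h1]
  rw [e2]
  field_simp
  linear_combination hr2

private lemma itdm_integral_inv_add_cos (A B : ℝ) (h : |B| < A) :
    ∫ θ in (0:ℝ)..(2*π), (A + B * Real.cos θ)⁻¹
      = 2*π / Real.sqrt (A^2 - B^2) := by
  have hcont : Continuous fun θ : ℝ => (A + B * Real.cos θ)⁻¹ :=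
    (continuous_const.add (continuous_const.mul Real.continuous_cos)).inv₀
      (fun x => ne_of_gt (itdm_add_cos_pos A B h x))
  rw [intervalIntegral.integral_eq_sub_of_hasDerivAt
      (fun θ _ => itdm_hasDerivAt_G A B h θ) (hcont.intervalIntegrable 0 (2*π))]
  simp [Real.sin_two_pi, Real.cos_two_pi, Real.arctan_zero]
  ring

private lemma itdm_cont_inv (A B : ℝ) (h : |B| < A) :
    Continuous fun θ : ℝ => (A + B * Real.cos θ)⁻¹ :=
  (continuous_const.add (continuous_const.mul Real.continuous_cos)).inv₀
    (fun x => ne_of_gt (itdm_add_cos_pos A B h x))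

private lemma itdm_integral_combo (k₁ k₂ A₁ B₁ A₂ B₂ : ℝ) (h₁ : |B₁| < A₁) (h₂ : |B₂| < A₂) :
    ∫ θ in (0:ℝ)..(2*π),
      (1 - k₁ * (A₁ + B₁ * Real.cos θ)⁻¹ - k₂ * (A₂ + B₂ * Real.cos θ)⁻¹)
      = 2*π - k₁ * (2*π / Real.sqrt (A₁^2 - B₁^2))
          - k₂ * (2*π / Real.sqrt (A₂^2 - B₂^2)) := by
  have c₁ := itdm_cont_inv A₁ B₁ h₁
  have c₂ := itdm_cont_inv A₂ B₂ h₂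
  have i0 : IntervalIntegrable (fun _ : ℝ => (1:ℝ)) MeasureTheory.volume 0 (2*π) :=
    intervalIntegrable_const
  have i₁ : IntervalIntegrable (fun θ => k₁ * (A₁ + B₁ * Real.cos θ)⁻¹)
      MeasureTheory.volume 0 (2*π) := (continuous_const.mul c₁).intervalIntegrable 0 (2*π)
  have i₂ : IntervalIntegrable (fun θ => k₂ * (A₂ + B₂ * Real.cos θ)⁻¹)
      MeasureTheory.volume 0 (2*π) := (continuous_const.mul c₂).intervalIntegrable 0 (2*π)
  rw [intervalIntegral.integral_sub (i0.sub i₁) i₂, intervalIntegral.integral_sub i0 i₁,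
    intervalIntegral.integral_const_mul, intervalIntegral.integral_const_mul,
    itdm_integral_inv_add_cos A₁ B₁ h₁, itdm_integral_inv_add_cos A₂ B₂ h₂]
  simp [smul_eq_mul]

private lemma itdm_combo_form (k₁ k₂ D₁ D₂ N : ℝ) (h₁ : D₁ ≠ 0) (h₂ : D₂ ≠ 0)
    (h : N = D₁*D₂ - k₁*D₂ - k₂*D₁) :
    N / (D₁*D₂) = 1 - k₁*D₁⁻¹ - k₂*D₂⁻¹ := by
  rw [h]
  field_simp

private lemma itdm_pointwise (q n₂ x : ℝ)
    (hD₁ : 0 < (1-q)/2 + n₂^2*q + -(n₂^2*q) * Real.cos x)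
    (hD₂ : 0 < (3+q)/2 - n₂^2*q + (n₂^2*q) * Real.cos x) :
    n₂^4*q^2*Real.sin x^2 / (1 - ((1+q)/2 - n₂^2*q*(1-Real.cos x))^2)
    = 1 - ((((1-q)/2 + n₂^2*q)^2 - (-(n₂^2*q))^2)/2) *
          ((1-q)/2 + n₂^2*q + -(n₂^2*q) * Real.cos x)⁻¹
        - ((((3+q)/2 - n₂^2*q)^2 - (n₂^2*q)^2)/2) *
          ((3+q)/2 - n₂^2*q + (n₂^2*q) * Real.cos x)⁻¹ := by
  have hs := Real.sin_sq_add_cos_sq x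
  have hden : 1 - ((1+q)/2 - n₂^2*q*(1-Real.cos x))^2
      = ((1-q)/2 + n₂^2*q + -(n₂^2*q) * Real.cos x) *
        ((3+q)/2 - n₂^2*q + (n₂^2*q) * Real.cos x) := by ring
  rw [hden]
  exact itdm_combo_form _ _ _ _ _ hD₁.ne' hD₂.ne'
    (by linear_combination (n₂^2*q)^2 * hs)

private lemma itdm_ae_sin_ne_zero :
    ∀ᵐ x : ℝ, Real.sin x ≠ 0 := by
  have hcnt : Set.Countable {x : ℝ | Real.sin x = 0} := by
    have hsub : {x : ℝ | Real.sin x = 0} ⊆ Set.range (fun n : ℤ => (n:ℝ)*π) := by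
      intro x hx
      obtain ⟨n, hn⟩ := Real.sin_eq_zero_iff.1 hx
      exact ⟨n, hn⟩
    exact (Set.countable_range _).mono hsub
  refine MeasureTheory.ae_iff.2 ?_
  simpa using hcnt.measure_zero _

/-- The `θ`-average over `[0, 2π]` of the single-qubit noisy ITDM Fisher
information equals
`1 − (1/4)√((3+q)(3+q−4qn₂²)) − (1/4)√((1−q)(1−q+4qn₂²))`. -/
theorem averaged_noisy_itdm_fisher_info
    (q : ℝ) (hq : q ∈ Set.Icc (0 : ℝ) 1)
    (n₂ : ℝ) (hn₂ : n₂ ∈ Set.Icc (-1 : ℝ) 1) :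
    (1 / (2 * π)) * ∫ θ in (0 : ℝ)..(2 * π),
        n₂ ^ 4 * q ^ 2 * Real.sin θ ^ 2 /
          (1 - ((1 + q) / 2 - n₂ ^ 2 * q * (1 - Real.cos θ)) ^ 2) =
      1 - (1 / 4) * Real.sqrt ((3 + q) * (3 + q - 4 * q * n₂ ^ 2)) -
        (1 / 4) * Real.sqrt ((1 - q) * (1 - q + 4 * q * n₂ ^ 2)) := by
  obtain ⟨hq0, hq1⟩ := hq
  obtain ⟨hn₂l, hn₂r⟩ := hn₂
  have hn2sq : n₂^2 ≤ 1 := by nlinarith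
  have ha0 : 0 ≤ n₂^2*q := by positivity
  by_cases ha : n₂^2*q = 0
  · -- degenerate case: integrand vanishes
    have hnum : n₂^4*q^2 = 0 := by linear_combination (n₂^2*q)*ha
    have h4 : 4*q*n₂^2 = 0 := by linear_combination 4*ha
    have s1 : Real.sqrt ((3+q)*(3+q-4*q*n₂^2)) = 3+q := by
      rw [h4, sub_zero, Real.sqrt_mul_self (by linarith)]
    have s2 : Real.sqrt ((1-q)*(1-q+4*q*n₂^2)) = 1-q := by
      rw [h4, add_zero, Real.sqrt_mul_self (by linarith)]
    rw [s1, s2]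
    simp only [hnum, zero_mul, zero_div]
    rw [intervalIntegral.integral_zero]
    ring
  · by_cases hqone : q = 1
    · subst hqone
      by_cases ha1 : n₂^2 = 1
      · -- q = 1, n₂² = 1 : integrand is a.e. 1
        have hInt : (∫ θ in (0:ℝ)..(2*π),
            n₂ ^ 4 * 1 ^ 2 * Real.sin θ ^ 2 /
              (1 - ((1 + 1) / 2 - n₂ ^ 2 * 1 * (1 - Real.cos θ)) ^ 2))
            = ∫ θ in (0:ℝ)..(2*π), (1:ℝ) := by
          refine intervalIntegral.integral_congr_ae ?_
          filter_upwards [itdm_ae_sin_ne_zero] with x hx _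
          have hs := Real.sin_sq_add_cos_sq x
          have hden : 1 - ((1 + 1) / 2 - n₂ ^ 2 * 1 * (1 - Real.cos x)) ^ 2
              = Real.sin x ^ 2 := by
            rw [ha1]; linear_combination -hs
          have hn4 : n₂^4 = 1 := by nlinarith
          rw [hden, hn4, one_mul, one_pow, one_mul, div_self (pow_ne_zero 2 hx)]
        rw [hInt]
        have s1 : (3+1)*(3+1-4*1*n₂^2) = 0 := by rw [ha1]; ring
        have s2 : ((1:ℝ)-1)*(1-1+4*1*n₂^2) = 0 := by ring
        rw [s1, s2, Real.sqrt_zero]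
        simp only [intervalIntegral.integral_const, smul_eq_mul, sub_zero, mul_zero]
        field_simp [Real.pi_ne_zero]
      · -- q = 1, 0 < n₂² < 1
        set a := n₂^2 with hadef
        have ha' : a ≠ 0 := by simpa using ha
        have hapos : 0 < a := lt_of_le_of_ne (by positivity) (Ne.symm ha')
        have halt : a < 1 := lt_of_le_of_ne hn2sq ha1
        have h₁ : |a| < 2 - a := by rw [abs_of_pos hapos]; linarith
        have h₂ : |(0:ℝ)| < 1 := by norm_num
        have hInt : (∫ θ in (0:ℝ)..(2*π),
            n₂ ^ 4 * 1 ^ 2 * Real.sin θ ^ 2 /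
              (1 - ((1 + 1) / 2 - n₂ ^ 2 * 1 * (1 - Real.cos θ)) ^ 2))
            = ∫ θ in (0:ℝ)..(2*π),
              (1 - (2-2*a) * ((2-a) + a * Real.cos θ)⁻¹ - 0 * ((1:ℝ) + 0 * Real.cos θ)⁻¹) := by
          refine intervalIntegral.integral_congr_ae ?_
          filter_upwards [itdm_ae_sin_ne_zero] with x hx _
          have hs := Real.sin_sq_add_cos_sq x
          have hc1 : Real.cos x ≠ 1 := by
            intro hc
            apply hx
            nlinarith [hs]
          have hc1' : (1:ℝ) - Real.cos x ≠ 0 := fun h => hc1 (by linarith)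
          have hDpos : 0 < (2-a) + a * Real.cos x :=
            itdm_add_cos_pos (2-a) a h₁ x
          have hden : 1 - ((1 + 1) / 2 - n₂ ^ 2 * 1 * (1 - Real.cos x)) ^ 2
              = (a*(1 - Real.cos x)) * ((2-a) + a * Real.cos x) := by
            rw [hadef]; ring
          rw [hden]
          field_simp
          linear_combination ((n₂^2)^2 * ((2-a) + a * Real.cos x) - (n₂^4 + n₂^6*(Real.cos x - 1))) * hs
        rw [hInt, itdm_integral_combo (2-2*a) 0 (2-a) a 1 0 h₁ h₂]
        set t := Real.sqrt (1-a) with htdef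
        have ht2 : t^2 = 1-a := Real.sq_sqrt (by linarith)
        have htpos : 0 < t := Real.sqrt_pos.2 (by linarith)
        have e1 : Real.sqrt ((2-a)^2 - a^2) = 2*t := by
          rw [show (2-a)^2 - a^2 = (2*t)^2 by rw [mul_pow, ht2]; ring,
            Real.sqrt_sq (by positivity)]
        have e2 : Real.sqrt ((3+1)*(3+1-4*1*n₂^2)) = 4*t := by
          rw [show (3+1)*(3+1-4*1*n₂^2) = (4*t)^2 by rw [mul_pow, ht2, hadef]; ring,
            Real.sqrt_sq (by positivity)]
        have e3 : Real.sqrt (((1:ℝ)-1)*(1-1+4*1*n₂^2)) = 0 := by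
          rw [show ((1:ℝ)-1)*(1-1+4*1*n₂^2) = 0 by ring, Real.sqrt_zero]
        rw [e1, e2, e3]
        have h02 : Real.sqrt ((1:ℝ)^2 - 0^2) = 1 := by norm_num
        rw [h02]
        have : 2-2*a = 2*t^2 := by rw [ht2]; ring
        rw [this]
        field_simp [Real.pi_ne_zero]
        ring
    · -- main case: 0 < a, q < 1
      have hqlt : q < 1 := lt_of_le_of_ne hq1 hqone
      have hapos : 0 < n₂^2*q := lt_of_le_of_ne ha0 (Ne.symm ha)
      have haq : n₂^2*q ≤ q := by nlinarith
      set a := n₂^2*q with hadef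
      set A₁ := (1-q)/2 + a with hA₁
      set A₂ := (3+q)/2 - a with hA₂
      have h₁ : |(-a)| < A₁ := by
        rw [abs_neg, abs_of_pos hapos]; rw [hA₁]; linarith
      have h₂ : |a| < A₂ := by
        rw [abs_of_pos hapos]; rw [hA₂]; linarith
      set k₁ := (A₁^2 - (-a)^2)/2 with hk₁
      set k₂ := (A₂^2 - a^2)/2 with hk₂
      have hEq : Set.EqOn
          (fun θ => n₂ ^ 4 * q ^ 2 * Real.sin θ ^ 2 /
            (1 - ((1 + q) / 2 - n₂ ^ 2 * q * (1 - Real.cos θ)) ^ 2))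
          (fun θ => 1 - k₁ * (A₁ + (-a) * Real.cos θ)⁻¹ - k₂ * (A₂ + a * Real.cos θ)⁻¹)
          (Set.uIcc 0 (2*π)) := by
        intro x _
        have hD₁ : 0 < A₁ + (-a) * Real.cos x := itdm_add_cos_pos A₁ (-a) h₁ x
        have hD₂ : 0 < A₂ + a * Real.cos x := itdm_add_cos_pos A₂ a h₂ x
        exact itdm_pointwise q n₂ x hD₁ hD₂
      rw [intervalIntegral.integral_congr hEq,
        itdm_integral_combo k₁ k₂ A₁ (-a) A₂ a h₁ h₂]
      have haA₁ : a < A₁ := by rw [hA₁]; linarith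
      have haA₂ : a < A₂ := by rw [hA₂]; linarith
      clear_value k₁ k₂ A₁ A₂ a
      have h1pos : 0 < A₁^2 - (-a)^2 := by nlinarith
      have h2pos : 0 < A₂^2 - a^2 := by nlinarith
      set r₁ := Real.sqrt (A₁^2 - (-a)^2) with hr₁
      set r₂ := Real.sqrt (A₂^2 - a^2) with hr₂
      have hr₁sq : r₁^2 = A₁^2 - (-a)^2 := Real.sq_sqrt h1pos.le
      have hr₂sq : r₂^2 = A₂^2 - a^2 := Real.sq_sqrt h2pos.le
      have hr₁pos : 0 < r₁ := Real.sqrt_pos.2 h1pos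
      have hr₂pos : 0 < r₂ := Real.sqrt_pos.2 h2pos
      clear_value r₁ r₂
      have e1 : Real.sqrt ((1-q)*(1-q+4*q*n₂^2)) = 2*r₁ := by
        rw [show (1-q)*(1-q+4*q*n₂^2) = (2*r₁)^2 by
          rw [mul_pow, hr₁sq, hA₁, hadef]; ring,
          Real.sqrt_sq (by positivity)]
      have e2 : Real.sqrt ((3+q)*(3+q-4*q*n₂^2)) = 2*r₂ := by
        rw [show (3+q)*(3+q-4*q*n₂^2) = (2*r₂)^2 by
          rw [mul_pow, hr₂sq, hA₂, hadef]; ring,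
          Real.sqrt_sq (by positivity)]
      rw [e1, e2]
      have hk₁' : k₁ = r₁^2/2 := by rw [hk₁, hr₁sq]
      have hk₂' : k₂ = r₂^2/2 := by rw [hk₂, hr₂sq]
      rw [hk₁', hk₂']
      field_simp [Real.pi_ne_zero]
      ring
end

section
/- For q ∈ [0,1] and all θ ∈ ℝ, one has x + y ≤ 1, where x = (1/16)·((1+q)² − 4(q−1)q·cos θ)² and y = (1−q)²·sin²θ·(1 − (1/4)(−1 + q − 2q·cos θ)²). -/
set_option maxHeartbeats 2000000 in
private lemma P_nonneg (q c : ℝ) (hq0 : 0 ≤ q) (hq1 : q ≤ 1) (hc2 : -1 ≤ c) (hc1 : c ≤ 1) :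
    0 ≤ (3+q-4*q*c)*(5+2*q+q^2+4*q*c-4*q^2*c) - 4*(1-q)*(1-c^2)*(3-q+2*q*c)*(1+q-2*q*c) := by
  have hv : (0:ℝ) ≤ 1 - c := by linarith
  have hw : (0:ℝ) ≤ 1 + c := by linarith
  have hu : (0:ℝ) ≤ 1 - q := by linarith
  have h1 : 0 ≤ 3+q-4*q*c := by nlinarith [mul_nonneg hq0 hv]
  have h2 : 0 ≤ 1+q-2*q*c := by nlinarith [mul_nonneg hq0 hv]
  have h3 : 0 ≤ 3-q+2*q*c := by nlinarith [mul_nonneg hq0 hw]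
  nlinarith [mul_nonneg (mul_nonneg hu hv) (mul_nonneg hw h2), mul_nonneg (mul_nonneg hu hv) (mul_nonneg hw h3), mul_nonneg (mul_nonneg hq0 hv) h1, mul_nonneg (mul_nonneg hq0 hw) h1, sq_nonneg (1-q*c), sq_nonneg (q-c), mul_nonneg (mul_nonneg hu hu) (mul_nonneg hv hw), mul_nonneg h1 h2, mul_nonneg (mul_nonneg hq0 hu) (mul_nonneg hv hw), sq_nonneg ((1-q)*(1-c)), sq_nonneg (q*(1-c))]

/-- For `q ∈ [0,1]` and all `θ`, `x + y ≤ 1`, where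
`x = (1/16)((1+q)² − 4(q−1)q cosθ)²` and
`y = (1−q)² sin²θ (1 − (1/4)(−1+q−2q cosθ)²)`. -/
theorem flip_dominates_switch_inequality
    (q : ℝ) (hq : q ∈ Set.Icc (0 : ℝ) 1) (θ : ℝ) :
    (1 / 16) * ((1 + q) ^ 2 - 4 * (q - 1) * q * Real.cos θ) ^ 2 +
      (1 - q) ^ 2 * Real.sin θ ^ 2 *
        (1 - (1 / 4) * (-1 + q - 2 * q * Real.cos θ) ^ 2) ≤ 1 := by
  obtain ⟨hq0, hq1⟩ := hq
  rw [Real.sin_sq]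
  have hc1 : Real.cos θ ≤ 1 := Real.cos_le_one θ
  have hc2 : -1 ≤ Real.cos θ := Real.neg_one_le_cos θ
  set c := Real.cos θ with hc
  have hP := P_nonneg q c hq0 hq1 hc2 hc1
  have hu : (0:ℝ) ≤ 1 - q := by linarith
  nlinarith [mul_nonneg hu hP]
end
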